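/- (Optimal linear aggregation, scalar form.) Let ν > 0, σ > 0, and h ≠ 0 be real numbers, let G ~ N(0, ν²) and N ~ N(0, σ²) be independent real random variables, and set Y = h·sign(G) + N. Define c* = √(2/π)·h·ν / (h² + σ²). Then for every real c, E[ (G − c*·Y)² ] ≤ E[ (G − c·Y)² ], and the minimum value is E[ (G − c*·Y)² ] = ν² · ( 1 − (2/π)·h² / (h² + σ²) ). -/

import Mathlib

open Real MeasureTheory ProbabilityTheory Set
open scoped NNReal ENNReal

/-!
Expanding the square, `E[(G - c Y)²] = E[G²] - 2c E[GY] + c² E[Y²]` is a quadratic in `c`,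
minimized at `c = E[GY] / E[Y²]` with minimum `E[G²] - E[GY]² / E[Y²]`. For the one-bit channel
`Y = h sign G + N`, `E[GY] = h E|G| = h ν √(2/π)` since `G sign G = |G|` and `N` is centered and
independent of `G`, and `E[Y²] = h² + σ²` since `sign(G)² = 1` almost surely.
-/

lemma integral_Ioi_mul_exp_neg_mul_sq {b : ℝ} (hb : 0 < b) :
    ∫ x in Ioi (0 : ℝ), x * rexp (-b * x ^ 2) = (2 * b)⁻¹ := by
  apply Complex.ofReal_injective
  rw [← integral_complex_ofReal]
  push_cast
  exact integral_mul_cexp_neg_mul_sq (by simpa using hb)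

lemma integral_abs_gaussianReal (v : ℝ≥0) : ∫ x, |x| ∂gaussianReal 0 v = √(2 * v / π) := by
  rcases eq_or_ne v 0 with rfl | hv
  · simp [gaussianReal_zero_var]
  have hv' : (0 : ℝ) < v := by positivity
  have hpdf : ∀ x, gaussianPDFReal 0 v x • |x|
      = (√(2 * π * v))⁻¹ * (|x| * rexp (-(2 * (v : ℝ))⁻¹ * |x| ^ 2)) := fun x => by
    rw [gaussianPDFReal_def, sq_abs, smul_eq_mul]; ring_nf
  simp_rw [integral_gaussianReal_eq_integral_smul hv, hpdf, integral_const_mul]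
  rw [integral_comp_abs (f := fun x => x * rexp (-(2 * (v : ℝ))⁻¹ * x ^ 2)),
    integral_Ioi_mul_exp_neg_mul_sq (by positivity)]
  have hsqrt : √(2 * v / π) = √(2 * π * v) / π := by
    rw [show 2 * (v : ℝ) / π = 2 * π * v / π ^ 2 by field_simp, sqrt_div' _ (sq_nonneg π),
      sqrt_sq pi_pos.le]
  have hs : 0 < √(2 * π * v) := by positivity
  rw [hsqrt]
  field_simp
  rw [sq_sqrt (by positivity)]

lemma integral_sq_gaussianReal (v : ℝ≥0) : ∫ x, x ^ 2 ∂gaussianReal 0 v = v := by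
  rw [← variance_fun_id_gaussianReal,
    variance_of_integral_eq_zero (by fun_prop) integral_id_gaussianReal]

lemma Real.measurable_sign : Measurable Real.sign :=
  Measurable.ite measurableSet_Iio measurable_const <|
    Measurable.ite measurableSet_Ioi measurable_const measurable_const

lemma Real.mul_sign_self (x : ℝ) : x * Real.sign x = |x| := by
  rcases lt_trichotomy x 0 with hx | rfl | hx
  · rw [Real.sign_of_neg hx, abs_of_neg hx]; ring
  · simp
  · rw [Real.sign_of_pos hx, abs_of_pos hx]; ring

lemma Real.sign_sq_of_ne_zero {x : ℝ} (hx : x ≠ 0) : Real.sign x ^ 2 = 1 := by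
  rcases Real.sign_apply_eq_of_ne_zero x hx with h | h <;> simp [h]

section

variable {Ω : Type*} [MeasurableSpace Ω] {μ : Measure Ω}

lemma integral_add_mul_sq {X Y : Ω → ℝ} (hX : MemLp X 2 μ) (hY : MemLp Y 2 μ) (a : ℝ) :
    ∫ ω, (X ω + a * Y ω) ^ 2 ∂μ
      = ∫ ω, X ω ^ 2 ∂μ + 2 * a * ∫ ω, X ω * Y ω ∂μ + a ^ 2 * ∫ ω, Y ω ^ 2 ∂μ := by
  have hXY : Integrable (fun ω => X ω * Y ω) μ := hX.integrable_mul hY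
  have hXX_XY : Integrable (fun ω => X ω ^ 2 + 2 * a * (X ω * Y ω)) μ :=
    hX.integrable_sq.add (hXY.const_mul _)
  calc ∫ ω, (X ω + a * Y ω) ^ 2 ∂μ
      = ∫ ω, (X ω ^ 2 + 2 * a * (X ω * Y ω)) + a ^ 2 * Y ω ^ 2 ∂μ := by
        congr 1 with ω; ring
    _ = _ := by
      rw [integral_add hXX_XY (hY.integrable_sq.const_mul _),
        integral_add hX.integrable_sq (hXY.const_mul _), integral_const_mul, integral_const_mul]

lemma integral_sub_mul_sq_eq {X Y : Ω → ℝ} (hX : MemLp X 2 μ) (hY : MemLp Y 2 μ)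
    (hY0 : ∫ ω, Y ω ^ 2 ∂μ ≠ 0) (c : ℝ) :
    ∫ ω, (X ω - c * Y ω) ^ 2 ∂μ
      = ∫ ω, X ω ^ 2 ∂μ - (∫ ω, X ω * Y ω ∂μ) ^ 2 / ∫ ω, Y ω ^ 2 ∂μ
        + (∫ ω, Y ω ^ 2 ∂μ) * (c - (∫ ω, X ω * Y ω ∂μ) / ∫ ω, Y ω ^ 2 ∂μ) ^ 2 := by
  simp_rw [sub_eq_add_neg (X _), ← neg_mul]
  rw [integral_add_mul_sq hX hY]
  field_simp
  ring

lemma integral_mul_sign_add {G N : Ω → ℝ} (hGN : IndepFun G N μ) (hG : Integrable G μ)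
    (hN : Integrable N μ) (hN0 : ∫ ω, N ω ∂μ = 0) (h : ℝ) :
    ∫ ω, G ω * (h * Real.sign (G ω) + N ω) ∂μ = h * ∫ ω, |G ω| ∂μ := by
  have hGN_int : Integrable (fun ω => G ω * N ω) μ := hGN.integrable_mul hG hN
  calc ∫ ω, G ω * (h * Real.sign (G ω) + N ω) ∂μ
      = ∫ ω, h * |G ω| + G ω * N ω ∂μ := by
        congr 1 with ω; rw [← Real.mul_sign_self]; ring
    _ = h * ∫ ω, |G ω| ∂μ := by
      rw [integral_add (hG.abs.const_mul h) hGN_int, integral_const_mul,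
        hGN.integral_fun_mul_eq_mul_integral hG.1 hN.1, hN0, mul_zero, add_zero]

lemma memLp_sign_comp [IsFiniteMeasure μ] {G : Ω → ℝ} (hG : AEMeasurable G μ) (p : ℝ≥0∞) :
    MemLp (fun ω => Real.sign (G ω)) p μ := by
  refine MemLp.of_bound (Real.measurable_sign.comp_aemeasurable hG).aestronglyMeasurable 1
    (ae_of_all _ fun ω => ?_)
  rcases Real.sign_apply_eq (G ω) with h | h | h <;> simp [h]

lemma integral_sign_add_sq [IsProbabilityMeasure μ] {G N : Ω → ℝ} (hGN : IndepFun G N μ)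
    (hG : AEMeasurable G μ) (hG0 : ∀ᵐ ω ∂μ, G ω ≠ 0) (hN : MemLp N 2 μ)
    (hN0 : ∫ ω, N ω ∂μ = 0) (h : ℝ) :
    ∫ ω, (h * Real.sign (G ω) + N ω) ^ 2 ∂μ = h ^ 2 + ∫ ω, N ω ^ 2 ∂μ := by
  have hS := memLp_sign_comp hG 2
  have hNS : IndepFun N (fun ω => Real.sign (G ω)) μ :=
    (hGN.comp Real.measurable_sign measurable_id).symm
  have hSN : ∫ ω, N ω * Real.sign (G ω) ∂μ = 0 := by
    rw [hNS.integral_fun_mul_eq_mul_integral hN.1 hS.1, hN0, zero_mul]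
  have hSS : ∫ ω, Real.sign (G ω) ^ 2 ∂μ = 1 := by
    rw [integral_congr_ae (hG0.mono fun ω hω => Real.sign_sq_of_ne_zero hω)]
    simp
  simp_rw [add_comm (h * _), integral_add_mul_sq hN hS, hSN, hSS]
  ring

end

namespace ProbabilityTheory.HasLaw

variable {Ω : Type*} [MeasurableSpace Ω] {μ : Measure Ω} {X : Ω → ℝ} {m : ℝ} {v : ℝ≥0}

lemma memLp_gaussianReal (hX : HasLaw X (gaussianReal m v) μ) (p : ℝ≥0) : MemLp X p μ :=
  (hX.map_eq ▸ memLp_id_gaussianReal p).comp_of_map hX.aemeasurable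

lemma integral_gaussianReal (hX : HasLaw X (gaussianReal m v) μ) : ∫ ω, X ω ∂μ = m :=
  hX.integral_eq.trans integral_id_gaussianReal

lemma integral_sq_gaussianReal (hX : HasLaw X (gaussianReal 0 v) μ) :
    ∫ ω, X ω ^ 2 ∂μ = v :=
  (hX.integral_comp (f := fun x => x ^ 2) (by fun_prop)).trans (_root_.integral_sq_gaussianReal v)

lemma integral_abs_gaussianReal (hX : HasLaw X (gaussianReal 0 v) μ) :
    ∫ ω, |X ω| ∂μ = √(2 * v / π) :=
  (hX.integral_comp (f := fun x => |x|) (by fun_prop)).trans (_root_.integral_abs_gaussianReal v)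

lemma ae_ne_gaussianReal (hX : HasLaw X (gaussianReal m v) μ) (hv : v ≠ 0) (a : ℝ) :
    ∀ᵐ ω ∂μ, X ω ≠ a := by
  have := nullSingletonClass_gaussianReal (μ := m) hv
  exact (hX.ae_iff (p := (· ≠ a)) (by measurability)).2 ((gaussianReal m v).ae_ne a)

end ProbabilityTheory.HasLaw

theorem stmt_11_general {Ω : Type*} [MeasurableSpace Ω] (μ : Measure Ω) [IsProbabilityMeasure μ]
    (ν σ h : ℝ) (hν : 0 < ν) (hσ : 0 < σ) (G N : Ω → ℝ)
    (hGmeas : Measurable G) (hNmeas : Measurable N)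
    (hG : μ.map G = gaussianReal 0 ⟨ν ^ 2, sq_nonneg ν⟩)
    (hN : μ.map N = gaussianReal 0 ⟨σ ^ 2, sq_nonneg σ⟩)
    (hindep : IndepFun G N μ)
    (Y : Ω → ℝ) (hY : Y = fun ω => h * Real.sign (G ω) + N ω)
    (cstar : ℝ) (hcstar : cstar = Real.sqrt (2 / π) * h * ν / (h ^ 2 + σ ^ 2)) :
    (∀ c : ℝ, ∫ ω, (G ω - cstar * Y ω) ^ 2 ∂μ ≤ ∫ ω, (G ω - c * Y ω) ^ 2 ∂μ) ∧
    ∫ ω, (G ω - cstar * Y ω) ^ 2 ∂μ = ν ^ 2 * (1 - (2 / π) * h ^ 2 / (h ^ 2 + σ ^ 2)) := by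
  have hGlaw : HasLaw G (gaussianReal 0 ⟨ν ^ 2, sq_nonneg ν⟩) μ := ⟨hGmeas.aemeasurable, hG⟩
  have hNlaw : HasLaw N (gaussianReal 0 ⟨σ ^ 2, sq_nonneg σ⟩) μ := ⟨hNmeas.aemeasurable, hN⟩
  have hG2 : MemLp G 2 μ := hGlaw.memLp_gaussianReal 2
  have hN2 : MemLp N 2 μ := hNlaw.memLp_gaussianReal 2
  have hY2 : MemLp Y 2 μ := hY ▸ ((memLp_sign_comp hGmeas.aemeasurable 2).const_mul h).add hN2
  have hGG : ∫ ω, G ω ^ 2 ∂μ = ν ^ 2 := hGlaw.integral_sq_gaussianReal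
  have hGabs : ∫ ω, |G ω| ∂μ = √(2 * ν ^ 2 / π) := hGlaw.integral_abs_gaussianReal
  have hG0 : ∀ᵐ ω ∂μ, G ω ≠ 0 :=
    hGlaw.ae_ne_gaussianReal (fun h0 => (pow_pos hν 2).ne' (congrArg NNReal.toReal h0)) 0
  have hNN : ∫ ω, N ω ^ 2 ∂μ = σ ^ 2 := hNlaw.integral_sq_gaussianReal
  have hGY : ∫ ω, G ω * Y ω ∂μ = √(2 / π) * h * ν := by
    rw [hY, integral_mul_sign_add hindep (hG2.integrable one_le_two) (hN2.integrable one_le_two)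
      hNlaw.integral_gaussianReal, hGabs, mul_div_right_comm, sqrt_mul (by positivity),
      sqrt_sq hν.le]
    ring
  have hYY : ∫ ω, Y ω ^ 2 ∂μ = h ^ 2 + σ ^ 2 := by
    rw [hY, integral_sign_add_sq hindep hGmeas.aemeasurable hG0 hN2 hNlaw.integral_gaussianReal,
      hNN]
  have hvar : 0 < h ^ 2 + σ ^ 2 := by positivity
  have hmse := integral_sub_mul_sq_eq hG2 hY2 (hYY ▸ hvar.ne')
  rw [hGY, hYY, hGG] at hmse
  refine ⟨fun c => ?_, ?_⟩
  · rw [hmse, hmse, hcstar, sub_self, zero_pow two_ne_zero, mul_zero, add_zero]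
    exact le_add_of_nonneg_right (by positivity)
  · rw [hmse, hcstar, sub_self, zero_pow two_ne_zero, mul_zero, add_zero, mul_pow, mul_pow,
      sq_sqrt (by positivity)]
    field_simp

/-- Optimal linear (Bussgang-type) aggregation, scalar form: the coefficient
c* = √(2/π)·h·ν/(h² + σ²) minimizes the MSE among all linear estimators, and the
minimum value is ν²·(1 − (2/π)·h²/(h² + σ²)). -/
theorem stmt_11 {Ω : Type*} [MeasurableSpace Ω] (μ : Measure Ω) [IsProbabilityMeasure μ]
    (ν σ h : ℝ) (hν : 0 < ν) (hσ : 0 < σ) (hh : h ≠ 0) (G N : Ω → ℝ)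
    (hGmeas : Measurable G) (hNmeas : Measurable N)
    (hG : μ.map G = gaussianReal 0 ⟨ν ^ 2, sq_nonneg ν⟩)
    (hN : μ.map N = gaussianReal 0 ⟨σ ^ 2, sq_nonneg σ⟩)
    (hindep : IndepFun G N μ)
    (Y : Ω → ℝ) (hY : Y = fun ω => h * Real.sign (G ω) + N ω)
    (cstar : ℝ) (hcstar : cstar = Real.sqrt (2 / π) * h * ν / (h ^ 2 + σ ^ 2)) :
    (∀ c : ℝ, ∫ ω, (G ω - cstar * Y ω) ^ 2 ∂μ ≤ ∫ ω, (G ω - c * Y ω) ^ 2 ∂μ) ∧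
    ∫ ω, (G ω - cstar * Y ω) ^ 2 ∂μ = ν ^ 2 * (1 - (2 / π) * h ^ 2 / (h ^ 2 + σ ^ 2)) :=
  stmt_11_general μ ν σ h hν hσ G N hGmeas hNmeas hG hN hindep Y hY cstar hcstar
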